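/- Let θ ∈ [0,1), h = T/M with M ∈ ℕ, and let (a_m)_{0≤m≤M} be nonnegative reals satisfying a_m ≤ C₁ + C₂ h^{1−θ} ∑_{l=0}^{m−1} (m−l)^{−θ} a_l for all m, with constants C₁, C₂ ≥ 0. Then there exists a constant C depending only on C₁, C₂, T, θ (and not on M) such that a_m ≤ C for all m ∈ {0,…,M}. -/

import Mathlib

/-!
Choose a window length `τ` so small that `C₂ τ ^ (1 - θ) / (1 - θ) ≤ 1 / 2`. Since
`h ^ (1 - θ) ∑_{j ≤ τ / h} j ^ (-θ) ≤ τ ^ (1 - θ) / (1 - θ)` for every step `h`, the part of the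
sum over the last `⌊τ / h⌋` indices can absorb half of the current bound, while the older indices
carry the bound of the previous window times the total kernel mass
`B = C₂ T ^ (1 - θ) / (1 - θ)`. Hence the bound grows by at most the factor `max 4 (4 B)` from
one window to the next, and there are at most `T / τ + 1` windows, whatever `M` is. The kernel mass
estimate is a telescoping sum of the concavity bound
`(1 - θ) (x + 1) ^ (-θ) ≤ (x + 1) ^ (1 - θ) - x ^ (1 - θ)`.
-/

open Finset Real

theorem one_sub_mul_rpow_neg_le_rpow_sub_rpow {θ x : ℝ} (hθ0 : 0 ≤ θ) (hθ1 : θ ≤ 1)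
    (hx : 0 ≤ x) :
    (1 - θ) * (x + 1) ^ (-θ) ≤ (x + 1) ^ (1 - θ) - x ^ (1 - θ) := by
  have hx1 : 0 < x + 1 := by linarith
  -- weighted AM-GM: x ^ (1 - θ) * (x + 1) ^ θ ≤ (1 - θ) x + θ (x + 1) = x + θ
  have amgm : x ^ (1 - θ) * (x + 1) ^ θ ≤ (1 - θ) * x + θ * (x + 1) :=
    geom_mean_le_arith_mean2_weighted (by linarith) hθ0 hx hx1.le (by ring)
  have hcancel : (x + 1) ^ θ * (x + 1) ^ (-θ) = 1 := by
    rw [← rpow_add hx1, add_neg_cancel, rpow_zero]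
  have hsplit : (x + 1) ^ (1 - θ) = (x + 1) * (x + 1) ^ (-θ) := by
    rw [sub_eq_add_neg, rpow_add hx1, rpow_one]
  calc (1 - θ) * (x + 1) ^ (-θ)
      = (x + 1) * (x + 1) ^ (-θ) - (x + θ) * (x + 1) ^ (-θ) := by ring
    _ ≤ (x + 1) ^ (1 - θ) - x ^ (1 - θ) * (x + 1) ^ θ * (x + 1) ^ (-θ) := by
      rw [hsplit]; gcongr; linarith
    _ = (x + 1) ^ (1 - θ) - x ^ (1 - θ) := by rw [mul_assoc, hcancel, mul_one]

theorem one_sub_mul_sum_Ico_rpow_neg_le {θ : ℝ} (hθ0 : 0 ≤ θ) (hθ1 : θ < 1) {k m : ℕ}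
    (hkm : k ≤ m) :
    (1 - θ) * ∑ l ∈ Ico k m, ((m : ℝ) - l) ^ (-θ) ≤ ((m : ℝ) - k) ^ (1 - θ) := by
  set g : ℕ → ℝ := fun l => -((m : ℝ) - l) ^ (1 - θ)
  have step : ∀ l ∈ Ico k m, (1 - θ) * ((m : ℝ) - l) ^ (-θ) ≤ g (l + 1) - g l := by
    intro l hl
    have hlm : (l : ℝ) + 1 ≤ m := by exact_mod_cast (mem_Ico.1 hl).2
    have := one_sub_mul_rpow_neg_le_rpow_sub_rpow hθ0 hθ1.le (x := m - l - 1) (by linarith)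
    rw [sub_add_cancel, sub_sub] at this
    simp only [g, Nat.cast_add, Nat.cast_one]
    linarith
  calc (1 - θ) * ∑ l ∈ Ico k m, ((m : ℝ) - l) ^ (-θ)
      ≤ ∑ l ∈ Ico k m, (g (l + 1) - g l) := by rw [mul_sum]; exact sum_le_sum step
    _ = ((m : ℝ) - k) ^ (1 - θ) := by
      rw [sum_Ico_sub g hkm]
      simp [g, zero_rpow (by linarith : (1 : ℝ) - θ ≠ 0)]

theorem rpow_mul_sum_Ico_rpow_neg_le {θ h U : ℝ} (hθ0 : 0 ≤ θ) (hθ1 : θ < 1) (hh : 0 ≤ h)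
    {k m : ℕ} (hkm : k ≤ m) (hU : ((m : ℝ) - k) * h ≤ U) :
    h ^ (1 - θ) * ∑ l ∈ Ico k m, ((m : ℝ) - l) ^ (-θ) ≤ U ^ (1 - θ) / (1 - θ) := by
  have hp : 0 < 1 - θ := by linarith
  have hk : 0 ≤ (m : ℝ) - k := sub_nonneg.2 (by exact_mod_cast hkm)
  rw [le_div_iff₀ hp]
  calc (h ^ (1 - θ) * ∑ l ∈ Ico k m, ((m : ℝ) - l) ^ (-θ)) * (1 - θ)
      = h ^ (1 - θ) * ((1 - θ) * ∑ l ∈ Ico k m, ((m : ℝ) - l) ^ (-θ)) := by ring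
    _ ≤ h ^ (1 - θ) * ((m : ℝ) - k) ^ (1 - θ) :=
        mul_le_mul_of_nonneg_left (one_sub_mul_sum_Ico_rpow_neg_le hθ0 hθ1 hkm) (rpow_nonneg hh _)
    _ = (((m : ℝ) - k) * h) ^ (1 - θ) := by rw [mul_rpow hk hh, mul_comm]
    _ ≤ U ^ (1 - θ) := rpow_le_rpow (by positivity) hU hp.le

theorem rpow_mul_sum_Ico_floor_rpow_neg_le {θ h τ : ℝ} (hθ0 : 0 ≤ θ) (hθ1 : θ < 1)
    (hh : 0 < h) (hτ : 0 ≤ τ) (m : ℕ) :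
    h ^ (1 - θ) * ∑ l ∈ Ico (m - ⌊τ / h⌋₊) m, ((m : ℝ) - l) ^ (-θ)
      ≤ τ ^ (1 - θ) / (1 - θ) := by
  refine rpow_mul_sum_Ico_rpow_neg_le hθ0 hθ1 hh.le (Nat.sub_le _ _) ?_
  refine le_trans ?_ ((le_div_iff₀ hh).1 (Nat.floor_le (by positivity)))
  gcongr
  have : (m : ℝ) ≤ (m - ⌊τ / h⌋₊ : ℕ) + ⌊τ / h⌋₊ := by
    exact_mod_cast (show m ≤ m - ⌊τ / h⌋₊ + ⌊τ / h⌋₊ by omega)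
  linarith

theorem rpow_mul_sum_range_rpow_neg_le {θ h U : ℝ} (hθ0 : 0 ≤ θ) (hθ1 : θ < 1)
    (hh : 0 ≤ h) {m : ℕ} (hU : m * h ≤ U) :
    h ^ (1 - θ) * ∑ l ∈ range m, ((m : ℝ) - l) ^ (-θ) ≤ U ^ (1 - θ) / (1 - θ) := by
  rw [range_eq_Ico]
  exact rpow_mul_sum_Ico_rpow_neg_le hθ0 hθ1 hh m.zero_le (by rwa [Nat.cast_zero, sub_zero])

theorem div_floor_add_one_le_floor {τ h : ℝ} (hτ : 0 < τ) (hh : 0 < h) (m : ℕ) :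
    m / (⌊τ / h⌋₊ + 1) ≤ ⌊m * h / τ⌋₊ := by
  apply Nat.le_floor
  have hτh : τ < (⌊τ / h⌋₊ + 1) * h := (div_lt_iff₀ hh).1 (Nat.lt_floor_add_one _)
  calc ((m / (⌊τ / h⌋₊ + 1) : ℕ) : ℝ) ≤ m / (⌊τ / h⌋₊ + 1) := by
        exact_mod_cast Nat.cast_div_le
    _ ≤ m * h / τ := by
      rw [div_le_div_iff₀ (by positivity) hτ, mul_assoc, mul_comm h]
      gcongr

theorem sum_mul_le_sum_mul_of_le {ι : Type*} {s : Finset ι} {w a : ι → ℝ} {b : ℝ}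
    (hw : ∀ l ∈ s, 0 ≤ w l) (ha : ∀ l ∈ s, a l ≤ b) :
    ∑ l ∈ s, w l * a l ≤ (∑ l ∈ s, w l) * b := by
  rw [sum_mul]
  exact sum_le_sum fun l hl => mul_le_mul_of_nonneg_left (ha l hl) (hw l hl)

theorem le_mul_pow_of_le_add_sum {a : ℕ → ℝ} {w : ℕ → ℕ → ℝ} {c B : ℝ} {n N : ℕ}
    (hc : 0 ≤ c) (hw : ∀ m l, l < m → 0 ≤ w m l)
    (hrecent : ∀ m ≤ N, ∑ l ∈ Ico (m - n) m, w m l ≤ 1 / 2)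
    (htotal : ∀ m ≤ N, ∑ l ∈ range m, w m l ≤ B)
    (ha : ∀ m ≤ N, a m ≤ c + ∑ l ∈ range m, w m l * a l) :
    ∀ m ≤ N, a m ≤ c * max 4 (4 * B) ^ (m / (n + 1) + 1) := by
  set A := max 4 (4 * B)
  have hA : 4 ≤ A := le_max_left _ _
  have hBA : B ≤ A / 4 := by linarith [le_max_right 4 (4 * B)]
  intro m
  induction m using Nat.strong_induction_on with
  | _ m ih =>
  intro hmN
  set k := m / (n + 1)
  have hbound : ∀ l < m, a l ≤ c * A ^ (l / (n + 1) + 1) := fun l hl => ih l hl (by omega)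
  have hweights : ∀ s ⊆ range m, ∀ l ∈ s, 0 ≤ w m l :=
    fun s hs l hl => hw m l (mem_range.1 (hs hl))
  have hrecent_sum : ∑ l ∈ Ico (m - n) m, w m l * a l ≤ 1 / 2 * (c * A ^ (k + 1)) := by
    refine (sum_mul_le_sum_mul_of_le (b := c * A ^ (k + 1)) (hweights _ ?_)
      fun l hl => ?_).trans ?_
    · intro l hl; simp only [mem_Ico, mem_range] at hl ⊢; omega
    · refine (hbound l (mem_Ico.1 hl).2).trans ?_
      gcongr
      · linarith
      · exact Nat.div_le_div_right (mem_Ico.1 hl).2.le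
    · exact mul_le_mul_of_nonneg_right (hrecent m hmN) (by positivity)
  -- an index more than `n` steps back lies in an earlier window
  have hold_sum : ∑ l ∈ Ico 0 (m - n), w m l * a l ≤ A / 4 * (c * A ^ k) := by
    refine (sum_mul_le_sum_mul_of_le (b := c * A ^ k) (hweights _ ?_) fun l hl => ?_).trans ?_
    · intro l hl; simp only [mem_Ico, mem_range] at hl ⊢; omega
    · refine (hbound l (by simp only [mem_Ico] at hl; omega)).trans ?_
      gcongr
      · linarith
      · rw [← Nat.add_div_right _ n.succ_pos]
        exact Nat.div_le_div_right (by simp only [mem_Ico] at hl; omega)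
    · refine mul_le_mul_of_nonneg_right ?_ (by positivity)
      refine le_trans ?_ ((htotal m hmN).trans hBA)
      exact sum_le_sum_of_subset_of_nonneg
        (fun l hl => by simp only [mem_Ico, mem_range] at hl ⊢; omega)
        fun l hl _ => hw m l (mem_range.1 hl)
  have hsplit : ∑ l ∈ range m, w m l * a l
      = ∑ l ∈ Ico 0 (m - n), w m l * a l + ∑ l ∈ Ico (m - n) m, w m l * a l := by
    rw [range_eq_Ico, sum_Ico_consecutive _ (Nat.zero_le _) (Nat.sub_le m n)]
  have hc4 : c * 4 ≤ c * A ^ (k + 1) :=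
    mul_le_mul_of_nonneg_left (hA.trans (le_self_pow₀ (by linarith) k.succ_ne_zero)) hc
  calc a m ≤ c + (A / 4 * (c * A ^ k) + 1 / 2 * (c * A ^ (k + 1))) := by
        linarith [ha m hmN, hsplit]
    _ ≤ c * A ^ (k + 1) := by rw [pow_succ] at hc4 ⊢; linarith

/-- Generalized discrete Gronwall lemma with weakly singular kernel: if `θ ∈ [0,1)`,
`h = T/M`, and nonnegative `(a_m)` satisfy
`a_m ≤ C₁ + C₂ h^{1−θ} ∑_{l=0}^{m−1} (m−l)^{−θ} a_l`, then `a_m ≤ C` for a constant `C`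
depending only on `C₁, C₂, T, θ` (not on `M`). -/
theorem stmt_13 (θ T C₁ C₂ : ℝ) (hθ0 : 0 ≤ θ) (hθ1 : θ < 1) (hT : 0 < T)
    (hC₁ : 0 ≤ C₁) (hC₂ : 0 ≤ C₂) :
    ∃ C : ℝ, ∀ M : ℕ, 0 < M → ∀ a : ℕ → ℝ, (∀ m, 0 ≤ a m) →
      (∀ m ≤ M, a m ≤ C₁ + C₂ * (T / M) ^ (1 - θ) *
        ∑ l ∈ Finset.range m, ((m : ℝ) - (l : ℝ)) ^ (-θ) * a l) →
      ∀ m ≤ M, a m ≤ C := by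
  have hp : 0 < 1 - θ := by linarith
  obtain ⟨τ, hτ, hτhalf⟩ : ∃ τ > 0, C₂ * (τ ^ (1 - θ) / (1 - θ)) ≤ 1 / 2 := by
    refine ⟨((1 - θ) / (2 * C₂ + 1)) ^ (1 - θ)⁻¹, by positivity, ?_⟩
    rw [rpow_inv_rpow (by positivity) hp.ne', div_div_cancel_left' hp.ne', ← div_eq_mul_inv,
      div_le_iff₀ (by positivity)]
    linarith
  refine ⟨C₁ * max 4 (4 * (C₂ * (T ^ (1 - θ) / (1 - θ)))) ^ (⌊T / τ⌋₊ + 1),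
    fun M hM a _ ha m hm => ?_⟩
  set h := T / M
  have hh : 0 < h := by positivity
  have hMh : (M : ℝ) * h = T := mul_div_cancel₀ T (by positivity)
  have hwindow := le_mul_pow_of_le_add_sum (n := ⌊τ / h⌋₊) hC₁
    (w := fun j l => C₂ * h ^ (1 - θ) * ((j : ℝ) - l) ^ (-θ))
    (fun j l hlj => mul_nonneg (by positivity)
      (rpow_nonneg (sub_nonneg.2 (by exact_mod_cast hlj.le)) _))
    (fun j _ => by
      rw [← mul_sum, mul_assoc]
      exact (mul_le_mul_of_nonneg_left
        (rpow_mul_sum_Ico_floor_rpow_neg_le hθ0 hθ1 hh hτ.le j) hC₂).trans hτhalf)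
    (fun j hj => by
      rw [← mul_sum, mul_assoc]
      exact mul_le_mul_of_nonneg_left
        (rpow_mul_sum_range_rpow_neg_le (U := T) hθ0 hθ1 hh.le (hMh ▸ by gcongr)) hC₂)
    (by simpa only [mul_sum, mul_assoc] using ha) m hm
  refine hwindow.trans ?_
  gcongr
  · exact le_max_of_le_left (by norm_num)
  · exact (div_floor_add_one_le_floor hτ hh m).trans
      (Nat.floor_le_floor (by gcongr; exact hMh ▸ by gcongr))
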